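/- If C is a semisimple tensor category, then there is a canonical group isomorphism between the abelian group of functorial tensor automorphisms of C and the group of k-valued characters of the grading group Gr_C. -/

import Mathlib

/-!
A functorial tensor automorphism acts on each simple object `s j` by a scalar `c j`, and
naturality along the nonzero maps `s i ⟶ s j ⊗ s l` turns compatibility with `⊗` into the
grading relation `c j * c l = c i`. Conversely, since every object splits into simple ones and
there are no nonzero maps between distinct simple objects, every `kˣ`-valued grading is the family
of scalars of exactly one tensor automorphism. Tensor automorphisms are thus the `kˣ`-valued
gradings, and by the universal property these are the characters of the grading group.
-/

open CategoryTheory MonoidalCategory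

section

variable {C : Type*} [Category C]

/-- A functorial tensor automorphism of a monoidal category. -/
def IsTensorAut [MonoidalCategory C] (φ : Aut (𝟭 C)) : Prop :=
  (∀ A B : C, φ.hom.app (A ⊗ B) = φ.hom.app A ⊗ₘ φ.hom.app B) ∧
    φ.hom.app (𝟙_ C) = 𝟙 (𝟙_ C)

/-- A `G`-grading of the semisimple tensor category with simple objects `s`. -/
def IsGrading [Preadditive C] [MonoidalCategory C] {ι : Type*} (s : ι → C)
    {G : Type*} [Group G] (g : ι → G) : Prop :=
  ∀ i j l : ι, (∃ f : s i ⟶ s j ⊗ s l, f ≠ 0) → g j * g l = g i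

lemma eq_one_of_forall_character {A : Type*} [CommGroup A] {x : A}
    (h : ∀ ψ : A →* Multiplicative (AddCircle (1 : ℚ)), ψ x = 1) : x = 1 :=
  Additive.ofMul.injective <| CharacterModule.eq_zero_of_character_apply fun c =>
    congrArg Multiplicative.toAdd (h (AddMonoidHom.toMultiplicativeRight c))

section RelGrading

variable {ι : Type*} (R : ι → ι → ι → Prop)

def IsRelGrading {G : Type*} [Group G] (g : ι → G) : Prop :=
  ∀ i j l, R i j l → g j * g l = g i

variable {R} in
lemma IsRelGrading.comp {G H : Type*} [Group G] [Group H] {g : ι → G} (hg : IsRelGrading R g)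
    (f : G →* H) : IsRelGrading R (f ∘ g) := fun i j l h => by
  simp only [Function.comp_apply, ← map_mul, hg i j l h]

def gradingSubgroup (M : Type*) [CommGroup M] : Subgroup (ι → M) where
  carrier := {g | IsRelGrading R g}
  one_mem' _ _ _ _ := mul_one 1
  mul_mem' {g g'} hg hg' i j l h := by
    simp only [Pi.mul_apply, mul_mul_mul_comm, hg i j l h, hg' i j l h]
  inv_mem' {g} hg i j l h := by
    simp only [Pi.inv_apply, ← mul_inv, hg i j l h]

def IsUniversalRelGrading {Gr : Type*} [Group Gr] (gr : ι → Gr) : Prop :=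
  ∀ (G : Type) [Group G] (g : ι → G), IsRelGrading R g → ∃! h : Gr →* G, ∀ j, h (gr j) = g j

-- Universality is only assumed against groups in `Type`. Characters into `ℚ/ℤ`, a group in `Type`
-- that separates the points of every commutative group, extend it to commutative groups in any
-- universe, at the price of working in the abelianization of `Gr`.
namespace IsUniversalRelGrading

variable {R} {Gr : Type*} [Group Gr] {gr : ι → Gr} (huniv : IsUniversalRelGrading R gr)
include huniv

lemma eq_one {G : Type} [Group G] {h : Gr →* G} (hh : ∀ j, h (gr j) = 1) : h = 1 :=
  (huniv G 1 fun _ _ _ _ => mul_one 1).unique hh fun _ => rfl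

lemma hom_ext {M : Type*} [CommGroup M] {h₁ h₂ : Gr →* M} (h : ∀ j, h₁ (gr j) = h₂ (gr j)) :
    h₁ = h₂ := by
  refine MonoidHom.ext fun x => div_eq_one.mp <| eq_one_of_forall_character fun ψ => ?_
  have hψ : ψ.comp (h₁ / h₂) = 1 := huniv.eq_one fun j => by simp [h j]
  exact DFunLike.congr_fun hψ x

lemma closure_range_abelianization :
    Subgroup.closure (Set.range fun j => Abelianization.of (gr j)) = ⊤ := by
  set H := Subgroup.closure (Set.range fun j => Abelianization.of (gr j))
  refine (Subgroup.eq_top_iff' H).mpr fun x => (QuotientGroup.eq_one_iff x).mp <|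
    eq_one_of_forall_character fun ψ => ?_
  have hψ : (ψ.comp (QuotientGroup.mk' H)).comp Abelianization.of = 1 := huniv.eq_one fun j => by
    have hj : Abelianization.of (gr j) ∈ H := Subgroup.subset_closure (Set.mem_range_self j)
    simp [(QuotientGroup.eq_one_iff (N := H) _).mpr hj]
  obtain ⟨y, rfl⟩ := QuotientGroup.mk_surjective x
  exact DFunLike.congr_fun hψ y

lemma exists_hom {M : Type*} [CommGroup M] {c : ι → M} (hc : IsRelGrading R c) :
    ∃ h : Gr →* M, ∀ j, h (gr j) = c j := by
  set P : FreeGroup ι →* Abelianization Gr := FreeGroup.lift fun j => Abelianization.of (gr j)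
  have hP : Function.Surjective P := by
    rw [← MonoidHom.range_eq_top, FreeGroup.range_lift_eq_closure,
      huniv.closure_range_abelianization]
  have hker : P.ker ≤ (FreeGroup.lift c).ker := fun w hw =>
    eq_one_of_forall_character fun ψ => by
      obtain ⟨h, hh, -⟩ := huniv _ _ (hc.comp ψ)
      have hlift : (Abelianization.lift h).comp P = ψ.comp (FreeGroup.lift c) :=
        FreeGroup.ext_hom _ _ fun j => by simp [P, hh j]
      simpa [MonoidHom.mem_ker.mp hw] using (DFunLike.congr_fun hlift w).symm
  refine ⟨(P.liftOfSurjective hP ⟨_, hker⟩).comp Abelianization.of, fun j => ?_⟩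
  simpa [P] using MonoidHom.liftOfRightInverse_comp_apply P _ (Function.rightInverse_surjInv hP)
    ⟨_, hker⟩ (FreeGroup.of j)

variable {M : Type*} [CommGroup M]

noncomputable def homEquiv (hgr : IsRelGrading R gr) : (Gr →* M) ≃* gradingSubgroup R M :=
  MulEquiv.ofBijective
    (MonoidHom.mk' (fun χ => ⟨χ ∘ gr, hgr.comp χ⟩) fun _ _ => rfl)
    ⟨fun _ _ h => huniv.hom_ext fun j => congr_fun (congrArg Subtype.val h) j,
      fun c => (huniv.exists_hom c.2).imp fun _ h => Subtype.ext (funext h)⟩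

lemma homEquiv_symm_apply (hgr : IsRelGrading R gr) (c : gradingSubgroup R M) (j : ι) :
    (huniv.homEquiv hgr).symm c (gr j) = (c : ι → M) j :=
  congr_fun (congrArg Subtype.val ((huniv.homEquiv hgr).apply_symm_apply c)) j

end IsUniversalRelGrading

end RelGrading

open Limits

section Splitting

variable [Preadditive C] {ι : Type*}

structure SimpleSplitting (s : ι → C) (X : C) where
  n : ℕ
  idx : Fin n → ι
  proj : ∀ m, X ⟶ s (idx m)
  incl : ∀ m, s (idx m) ⟶ X
  sum_proj_incl : ∑ m, proj m ≫ incl m = 𝟙 X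

lemma comp_sum_smul_comp {R : Type*} [Semiring R] [Linear R C] {X A : C} {J : Type*} [Fintype J]
    {Y : J → C} {p : ∀ m, X ⟶ Y m} {q : ∀ m, Y m ⟶ X} (hpq : ∑ m, p m ≫ q m = 𝟙 X)
    {d : J → R} {r : R} (v : A ⟶ X) (hd : ∀ m (w : A ⟶ Y m), d m • w = r • w) :
    v ≫ ∑ m, d m • (p m ≫ q m) = r • v := by
  calc v ≫ ∑ m, d m • (p m ≫ q m) = ∑ m, (d m • (v ≫ p m)) ≫ q m := by
        simp [Preadditive.comp_sum]
    _ = ∑ m, (r • (v ≫ p m)) ≫ q m := by simp only [hd]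
    _ = r • (v ≫ ∑ m, p m ≫ q m) := by simp [Preadditive.comp_sum, Finset.smul_sum]
    _ = r • v := by rw [hpq, Category.comp_id]

namespace SimpleSplitting

variable {s : ι → C} {X : C}

noncomputable def ofIsoBiproduct [HasFiniteBiproducts C] {n : ℕ} {f : Fin n → ι}
    (e : X ≅ ⨁ fun m => s (f m)) : SimpleSplitting s X where
  n := n
  idx := f
  proj m := e.hom ≫ biproduct.π (fun m => s (f m)) m
  incl m := biproduct.ι (fun m => s (f m)) m ≫ e.inv
  sum_proj_incl := by
    simp_rw [Category.assoc, ← Preadditive.comp_sum, ← Category.assoc (biproduct.π _ _),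
      ← Preadditive.sum_comp, biproduct.total, Category.id_comp, Iso.hom_inv_id]

lemma hom_ext (S : SimpleSplitting s X) {Z : C} {w w' : X ⟶ Z}
    (h : ∀ a (v : s a ⟶ X), v ≫ w = v ≫ w') : w = w' := by
  rw [← Category.id_comp w, ← Category.id_comp w', ← S.sum_proj_incl, Preadditive.sum_comp,
    Preadditive.sum_comp]
  simp only [Category.assoc, h]

variable {k : Type*} [Semiring k] [Linear k C]

def scalarEnd (S : SimpleSplitting s X) (c : ι → k) : X ⟶ X :=
  ∑ m, c (S.idx m) • (S.proj m ≫ S.incl m)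

lemma comp_scalarEnd (hzero : ∀ i j : ι, i ≠ j → ∀ f : s i ⟶ s j, f = 0)
    (S : SimpleSplitting s X) (c : ι → k) {a : ι} (v : s a ⟶ X) :
    v ≫ S.scalarEnd c = c a • v :=
  comp_sum_smul_comp S.sum_proj_incl v fun m w => by
    by_cases h : a = S.idx m
    · subst h; rfl
    · rw [hzero _ _ h w, smul_zero, smul_zero]

end SimpleSplitting

end Splitting

section Monoidal

variable [Preadditive C] {k : Type*} [CommSemiring k] [Linear k C]
  [MonoidalCategory C] [MonoidalPreadditive C] [MonoidalLinear k C]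

lemma smul_tensorHom_smul {X Y Z W : C} (a b : k) (f : X ⟶ Y) (g : Z ⟶ W) :
    (a • f) ⊗ₘ (b • g) = (a * b) • (f ⊗ₘ g) := by
  simp [MonoidalCategory.tensorHom_def, mul_smul, smul_comm a b]

lemma sum_smul_comp_tensorHom_sum_smul_comp {X X' : C} {J J' : Type*} [Fintype J] [Fintype J']
    {Y : J → C} {Y' : J' → C} (a : J → k) (b : J' → k) (p : ∀ j, X ⟶ Y j) (q : ∀ j, Y j ⟶ X)
    (p' : ∀ l, X' ⟶ Y' l) (q' : ∀ l, Y' l ⟶ X') :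
    (∑ j, a j • (p j ≫ q j)) ⊗ₘ (∑ l, b l • (p' l ≫ q' l)) =
      ∑ x : J × J', (a x.1 * b x.2) • ((p x.1 ⊗ₘ p' x.2) ≫ (q x.1 ⊗ₘ q' x.2)) := by
  simp only [sum_tensor, tensor_sum, smul_tensorHom_smul, tensorHom_comp_tensorHom,
    Fintype.sum_prod_type]
  exact Finset.sum_comm

end Monoidal

section ScalarAut

variable [Preadditive C] {k : Type*} [CommSemiring k] [Linear k C] {ι : Type*} {s : ι → C}
  (split : ∀ X : C, SimpleSplitting s X) (hzero : ∀ i j : ι, i ≠ j → ∀ f : s i ⟶ s j, f = 0)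

include split in
lemma natTrans_ext_of_app_simple {α β : 𝟭 C ⟶ 𝟭 C} (h : ∀ j, α.app (s j) = β.app (s j)) :
    α = β :=
  NatTrans.ext <| funext fun X => (split X).hom_ext fun a v => by
    have hα := α.naturality v
    have hβ := β.naturality v
    simp only [Functor.id_map, Functor.id_obj] at hα hβ
    rw [hα, hβ, h]

def scalarNatTrans (c : ι → k) : 𝟭 C ⟶ 𝟭 C where
  app X := (split X).scalarEnd c
  naturality X Y u := (split X).hom_ext fun a v => by
    simp only [Functor.id_map, Functor.id_obj, ← Category.assoc,
      SimpleSplitting.comp_scalarEnd hzero, Linear.smul_comp]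

lemma scalarNatTrans_app_simple (c : ι → k) (j : ι) :
    (scalarNatTrans split hzero c).app (s j) = c j • 𝟙 (s j) := by
  rw [← Category.id_comp ((scalarNatTrans split hzero c).app (s j))]
  exact SimpleSplitting.comp_scalarEnd hzero (split (s j)) c (𝟙 (s j))

def scalarEndHom : (ι → k) →* End (𝟭 C) where
  toFun := scalarNatTrans split hzero
  map_one' := natTrans_ext_of_app_simple split fun j => by
    simp [scalarNatTrans_app_simple]
  map_mul' c c' := natTrans_ext_of_app_simple split fun j => by
    simp [End.mul_def, scalarNatTrans_app_simple, smul_smul]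

noncomputable def scalarAut : (ι → kˣ) →* Aut (𝟭 C) :=
  (Aut.unitsEndEquivAut _).toMonoidHom.comp <|
    (Units.map (scalarEndHom split hzero)).comp MulEquiv.piUnits.symm.toMonoidHom

lemma scalarAut_hom (c : ι → kˣ) :
    (scalarAut split hzero c).hom = scalarNatTrans split hzero fun j => (c j : k) := rfl

lemma scalarAut_hom_app_simple (c : ι → kˣ) (j : ι) :
    (scalarAut split hzero c).hom.app (s j) = (c j : k) • 𝟙 (s j) :=
  scalarNatTrans_app_simple split hzero _ j

variable [MonoidalCategory C] [MonoidalPreadditive C] [MonoidalLinear k C]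

lemma scalarNatTrans_app_tensor {c : ι → k}
    (hc : ∀ a b d (w : s a ⟶ s b ⊗ s d), (c b * c d) • w = c a • w) (A B : C) :
    (scalarNatTrans split hzero c).app (A ⊗ B) =
      (scalarNatTrans split hzero c).app A ⊗ₘ (scalarNatTrans split hzero c).app B := by
  -- `A ⊗ B` splits through the objects `s b ⊗ s d`, and by `hc` the scalar `c b * c d` acts on
  -- every map from a simple `s a` into them as `c a` does.
  set SA := split A
  set SB := split B
  have hsplit : ∑ x : Fin SA.n × Fin SB.n,
      (SA.proj x.1 ⊗ₘ SB.proj x.2) ≫ (SA.incl x.1 ⊗ₘ SB.incl x.2) = 𝟙 (A ⊗ B) := by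
    simpa [SA.sum_proj_incl, SB.sum_proj_incl] using (sum_smul_comp_tensorHom_sum_smul_comp
      (fun _ => (1 : k)) (fun _ => 1) SA.proj SA.incl SB.proj SB.incl).symm
  refine (split (A ⊗ B)).hom_ext fun a v => ?_
  change v ≫ (split (A ⊗ B)).scalarEnd c = v ≫ (SA.scalarEnd c ⊗ₘ SB.scalarEnd c)
  rw [SimpleSplitting.comp_scalarEnd hzero, SimpleSplitting.scalarEnd,
    SimpleSplitting.scalarEnd, sum_smul_comp_tensorHom_sum_smul_comp,
    comp_sum_smul_comp hsplit v fun x w => hc a _ _ w]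

end ScalarAut

variable (C) in
def tensorAutSubgroup [MonoidalCategory C] : Subgroup (Aut (𝟭 C)) where
  carrier := {φ | IsTensorAut φ}
  one_mem' := ⟨fun _ _ => (id_tensorHom_id _ _).symm, rfl⟩
  mul_mem' := by
    rintro φ ψ ⟨hφ, hφ₁⟩ ⟨hψ, hψ₁⟩
    refine ⟨fun A B => ?_, ?_⟩
    · change ψ.hom.app _ ≫ φ.hom.app _ =
        (ψ.hom.app A ≫ φ.hom.app A) ⊗ₘ (ψ.hom.app B ≫ φ.hom.app B)
      rw [hφ, hψ, tensorHom_comp_tensorHom]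
      rfl
    · change ψ.hom.app _ ≫ φ.hom.app _ = _
      rw [hφ₁, hψ₁]
      exact Category.id_comp _
  inv_mem' := by
    rintro (φ : 𝟭 C ≅ 𝟭 C) ⟨hφ, hφ₁⟩
    refine ⟨fun A B => (φ.app (A ⊗ B)).inv_ext ?_, (φ.app (𝟙_ C)).inv_ext ?_⟩
    · rw [Iso.app_hom, hφ, tensorHom_comp_tensorHom]
      change (φ.hom.app A ≫ φ.inv.app A) ⊗ₘ (φ.hom.app B ≫ φ.inv.app B) = _
      simp
    · rw [Iso.app_hom, hφ₁]
      exact Category.id_comp _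

section Grading

variable [Preadditive C] [MonoidalCategory C] {ι : Type*}

-- `IsGrading s g` unfolds to `IsRelGrading (fusionRel s) g`.
def fusionRel (s : ι → C) (i j l : ι) : Prop :=
  ∃ f : s i ⟶ s j ⊗ s l, f ≠ 0

variable {s : ι → C}

lemma IsGrading.apply_eq_one_of_eq_unit {G : Type*} [Group G] {g : ι → G} (hg : IsGrading s g)
    {i₀ : ι} (hunit : s i₀ = 𝟙_ C) (hid : 𝟙 (s i₀) ≠ 0) : g i₀ = 1 := by
  refine mul_eq_left.mp (hg i₀ i₀ i₀ ?_)
  rw [hunit] at hid ⊢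
  exact ⟨(λ_ (𝟙_ C)).inv, fun h => hid (by simpa [h] using (λ_ (𝟙_ C)).inv_hom_id.symm)⟩

end Grading

section Field

variable [Preadditive C] {k : Type*} [Field k] [Linear k C]

lemma id_ne_zero_of_finrank_eq_one {X : C} (h : Module.finrank k (X ⟶ X) = 1) : 𝟙 X ≠ 0 := by
  intro h0
  have : Subsingleton (X ⟶ X) := ⟨((IsZero.iff_id_eq_zero X).mpr h0).eq_of_src⟩
  rw [Module.finrank_zero_of_subsingleton] at h
  exact zero_ne_one h

lemma CategoryTheory.Iso.exists_units_smul_id {X : C} (h : Module.finrank k (X ⟶ X) = 1)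
    (e : X ≅ X) :
    ∃ u : kˣ, e.hom = (u : k) • 𝟙 X := by
  have hid := id_ne_zero_of_finrank_eq_one h
  obtain ⟨r, hr⟩ := (finrank_eq_one_iff_of_nonzero' _ hid).mp h e.hom
  have hr0 : r ≠ 0 := by
    rintro rfl
    exact hid (by simpa [← hr] using e.hom_inv_id.symm)
  exact ⟨Units.mk0 r hr0, hr.symm⟩

variable [MonoidalCategory C] [MonoidalPreadditive C] [MonoidalLinear k C] {ι : Type*} {s : ι → C}

lemma IsTensorAut.isGrading {φ : Aut (𝟭 C)} (hφ : IsTensorAut φ) {u : ι → kˣ}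
    (hu : ∀ j, φ.hom.app (s j) = (u j : k) • 𝟙 (s j)) : IsGrading s u := by
  rintro i j l ⟨f, hf⟩
  refine Units.ext (smul_left_injective k hf ?_)
  have hnat := φ.hom.naturality f
  simp only [Functor.id_obj, Functor.id_map, hφ.1, hu, smul_tensorHom_smul, id_tensorHom_id,
    Linear.comp_smul, Linear.smul_comp, Category.comp_id, Category.id_comp] at hnat
  simpa using hnat

end Field

section Equiv

variable [Preadditive C] {k : Type*} [Field k] [Linear k C]
  [MonoidalCategory C] [MonoidalPreadditive C] [MonoidalLinear k C] {ι : Type*} {s : ι → C}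
  (split : ∀ X : C, SimpleSplitting s X) (hzero : ∀ i j : ι, i ≠ j → ∀ f : s i ⟶ s j, f = 0)

lemma isTensorAut_scalarAut {i₀ : ι} (hunit : s i₀ = 𝟙_ C) (hid : 𝟙 (s i₀) ≠ 0) {c : ι → kˣ}
    (hc : IsGrading s c) : IsTensorAut (scalarAut split hzero c) := by
  rw [IsTensorAut, scalarAut_hom]
  refine ⟨scalarNatTrans_app_tensor split hzero fun a b d w => ?_, ?_⟩
  · by_cases hw : w = 0
    · simp [hw]
    · rw [← Units.val_mul, hc a b d ⟨w, hw⟩]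
  · rw [← hunit, scalarNatTrans_app_simple, hc.apply_eq_one_of_eq_unit hunit hid, Units.val_one,
      one_smul]

lemma exists_scalarAut_eq (hend : ∀ j, Module.finrank k (s j ⟶ s j) = 1) {φ : Aut (𝟭 C)}
    (hφ : IsTensorAut φ) : ∃ c : ι → kˣ, IsGrading s c ∧ scalarAut split hzero c = φ := by
  choose u hu using fun j => (φ.app (s j)).exists_units_smul_id (hend j)
  refine ⟨u, hφ.isGrading hu, Iso.ext <| natTrans_ext_of_app_simple split fun j => ?_⟩
  rw [scalarAut_hom_app_simple]
  exact (hu j).symm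

noncomputable def gradingsEquivTensorAut (hend : ∀ j, Module.finrank k (s j ⟶ s j) = 1)
    {i₀ : ι} (hunit : s i₀ = 𝟙_ C) : gradingSubgroup (fusionRel s) kˣ ≃* tensorAutSubgroup C :=
  MulEquiv.ofBijective
    (((scalarAut split hzero).comp (gradingSubgroup (fusionRel s) kˣ).subtype).codRestrict _
      fun c => isTensorAut_scalarAut split hzero hunit (id_ne_zero_of_finrank_eq_one (hend i₀)) c.2)
    ⟨fun c c' h => Subtype.ext <| funext fun j => Units.ext <|
        smul_left_injective k (id_ne_zero_of_finrank_eq_one (hend j)) <|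
          (scalarAut_hom_app_simple split hzero (c : ι → kˣ) j).symm.trans <|
            (congrArg (fun φ : tensorAutSubgroup C => (φ : Aut (𝟭 C)).hom.app (s j)) h).trans
              (scalarAut_hom_app_simple split hzero (c' : ι → kˣ) j),
      fun φ => by
        obtain ⟨c, hc, h⟩ := exists_scalarAut_eq split hzero hend φ.2
        exact ⟨⟨c, hc⟩, Subtype.ext h⟩⟩

lemma gradingsEquivTensorAut_hom_app (hend : ∀ j, Module.finrank k (s j ⟶ s j) = 1) {i₀ : ι}
    (hunit : s i₀ = 𝟙_ C) (c : gradingSubgroup (fusionRel s) kˣ) (j : ι) :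
    (gradingsEquivTensorAut split hzero hend hunit c : Aut (𝟭 C)).hom.app (s j) =
      ((c : ι → kˣ) j : k) • 𝟙 (s j) :=
  scalarAut_hom_app_simple split hzero (c : ι → kˣ) j

end Equiv

theorem tensorAut_equiv_characters_general
    (k : Type*) [Field k]
    [Preadditive C] [Linear k C] [Limits.HasFiniteBiproducts C]
    [MonoidalCategory C] [MonoidalPreadditive C] [MonoidalLinear k C]
    {ι : Type*} (s : ι → C) (i₀ : ι) (hunit : s i₀ = 𝟙_ C)
    (hss : ∀ X : C, ∃ (n : ℕ) (f : Fin n → ι),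
      Nonempty (X ≅ ⨁ fun i : Fin n => s (f i)))
    (hend : ∀ j : ι, Module.finrank k (s j ⟶ s j) = 1)
    (hzero : ∀ i j : ι, i ≠ j → ∀ f : s i ⟶ s j, f = 0)
    -- `Gr` is the grading group of `C`: a universal group equipped with a grading
    (Gr : Type*) [Group Gr] (gr₀ : ι → Gr) (hgr : IsGrading s gr₀)
    (huniv : ∀ (G : Type) [Group G] (g : ι → G), IsGrading s g →
      ∃! h : Gr →* G, ∀ j : ι, h (gr₀ j) = g j) :
    ∃ (S : Subgroup (Aut (𝟭 C))) (_ : ∀ φ : Aut (𝟭 C), φ ∈ S ↔ IsTensorAut φ)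
      (e : S ≃* (Gr →* kˣ)),
      ∀ (φ : Aut (𝟭 C)) (hφ : φ ∈ S) (c : ι → k),
        (∀ j : ι, φ.hom.app (s j) = c j • 𝟙 (s j)) →
        ∀ j : ι, ((e ⟨φ, hφ⟩) (gr₀ j) : k) = c j := by
  choose n f he using hss
  let split (X : C) : SimpleSplitting s X := .ofIsoBiproduct (he X).some
  have huniv : IsUniversalRelGrading (fusionRel s) gr₀ := huniv
  let E := gradingsEquivTensorAut split hzero hend hunit
  refine ⟨tensorAutSubgroup C, fun _ => Iff.rfl, E.symm.trans (huniv.homEquiv hgr).symm,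
    fun φ hφ c hc j => ?_⟩
  have hφj : φ.hom.app (s j) = ((E.symm ⟨φ, hφ⟩ : ι → kˣ) j : k) • 𝟙 (s j) := by
    rw [← gradingsEquivTensorAut_hom_app split hzero hend hunit, E.apply_symm_apply]
  have hEj : ((E.symm ⟨φ, hφ⟩ : ι → kˣ) j : k) = c j :=
    smul_left_injective k (id_ne_zero_of_finrank_eq_one (hend j)) (hφj.symm.trans (hc j))
  exact (congrArg Units.val (huniv.homEquiv_symm_apply hgr _ j)).trans hEj

/-- For a semisimple tensor category `C` with grading group `Gr_C` (given here by its
universal property), the group of functorial tensor automorphisms of `C` is canonically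
isomorphic to the group of `k`-characters of `Gr_C`: the isomorphism sends an
automorphism with scalars `c j` on the simple objects to the character taking the
class of `j` to `c j`. -/
theorem tensorAut_equiv_characters
    (k : Type*) [Field k]
    [Preadditive C] [Linear k C] [Abelian C] [Limits.HasFiniteBiproducts C]
    [MonoidalCategory C] [MonoidalPreadditive C] [MonoidalLinear k C]
    {ι : Type*} (s : ι → C) (i₀ : ι) (hunit : s i₀ = 𝟙_ C)
    (hss : ∀ X : C, ∃ (n : ℕ) (f : Fin n → ι),
      Nonempty (X ≅ ⨁ fun i : Fin n => s (f i)))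
    (hend : ∀ j : ι, Module.finrank k (s j ⟶ s j) = 1)
    (hzero : ∀ i j : ι, i ≠ j → ∀ f : s i ⟶ s j, f = 0)
    -- `Gr` is the grading group of `C`: a universal group equipped with a grading
    (Gr : Type*) [Group Gr] (gr₀ : ι → Gr) (hgr : IsGrading s gr₀)
    (huniv : ∀ (G : Type) [Group G] (g : ι → G), IsGrading s g →
      ∃! h : Gr →* G, ∀ j : ι, h (gr₀ j) = g j) :
    ∃ (S : Subgroup (Aut (𝟭 C))) (_ : ∀ φ : Aut (𝟭 C), φ ∈ S ↔ IsTensorAut φ)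
      (e : S ≃* (Gr →* kˣ)),
      ∀ (φ : Aut (𝟭 C)) (hφ : φ ∈ S) (c : ι → k),
        (∀ j : ι, φ.hom.app (s j) = c j • 𝟙 (s j)) →
        ∀ j : ι, ((e ⟨φ, hφ⟩) (gr₀ j) : k) = c j :=
  tensorAut_equiv_characters_general k s i₀ hunit hss hend hzero Gr gr₀ hgr huniv

end
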